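/- Assume the trace class condition ∑_{n≥0}(|a_n - 1/2| + |b_n|) < ∞ and set ρ_n = ∑_{m≥n}(|a_m - 1/2| + |b_m|). Let λ ∈ (-1,1), θ = arccos λ, and let f⁺ = (f⁺_n)_{n≥-1} be a solution of the Jacobi equation at λ such that |f⁺_n e^{inθ} - 1| ≤ C₀ ρ_n for all n ≥ 0 and some constant C₀. Write e^{-iθ} f⁺_{-1} = κ e^{iη} with κ = |e^{-iθ} f⁺_{-1}| > 0 and η ∈ ℝ. Then there is a constant C such that |P_n(λ) - κ (sin θ)^{-1} sin((n+1)θ + η)| ≤ C ρ_n for all n ≥ 0 (the Bernstein–Szegő asymptotics P_n(λ) = κ(θ)(sin θ)^{-1} sin((n+1)θ + η(θ)) + O(ρ_n)). -/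

import Mathlib

/-!
Since `λ` is real, `f̄` is again a solution, so the Wronskian
`a_{n-1}(f_{n-1} f̄_n - f_n f̄_{n-1})` is independent of `n`. Letting `n → ∞`, where `f_n ≈ e^{-inθ}` and `a_n → 1/2`, identifies it
as `i sin θ`. Hence `Im (f_{-1} f̄_n)` is a real solution vanishing at `n = -1` and equal to
`sin θ` at `n = 0`, i.e. it is `sin θ · P_n`. Finally `f_{-1} = κ e^{i(θ+η)}` and
`f̄_n = e^{inθ} (1 + O(ρ_n))` give `Im (f_{-1} f̄_n) = κ sin((n+1)θ + η) + O(ρ_n)`.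
-/

open Filter Finset MeasureTheory

noncomputable section

/-- Extended coefficient sequence with `a₋₁ = 1/2`. -/
def aext (a : ℕ → ℝ) : ℤ → ℝ := fun k => if k < 0 then 1/2 else a k.toNat

/-- `u : ℤ → ℂ` (restricted to indices `n ≥ -1`) solves the Jacobi equation
`a_{n-1} u_{n-1} + b_n u_n + a_n u_{n+1} = z u_n` for all `n ≥ 0`, with `a_{-1} = 1/2`. -/
def IsJacobiSol (a b : ℕ → ℝ) (z : ℂ) (u : ℤ → ℂ) : Prop :=
  ∀ n : ℕ, (aext a ((n : ℤ) - 1) : ℂ) * u ((n : ℤ) - 1) + (b n : ℂ) * u (n : ℤ)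
      + (a n : ℂ) * u ((n : ℤ) + 1) = z * u (n : ℤ)

/-- The perturbation `V = H - H₀` applied to a sequence:
`(Vf)_m = (a_{m-1} - 1/2) f_{m-1} + b_m f_m + (a_m - 1/2) f_{m+1}` with `a_{-1} = 1/2`. -/
def jV (a b : ℕ → ℝ) (f : ℤ → ℂ) (m : ℕ) : ℂ :=
  ((aext a ((m : ℤ) - 1) - 1/2 : ℝ) : ℂ) * f ((m : ℤ) - 1) + (b m : ℂ) * f (m : ℤ)
    + ((a m - 1/2 : ℝ) : ℂ) * f ((m : ℤ) + 1)

open Complex ComplexConjugate Topology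

lemma aext_natCast (a : ℕ → ℝ) (n : ℕ) : aext a n = a n := by simp [aext]

lemma aext_neg_one (a : ℕ → ℝ) : aext a (-1) = 1 / 2 := by simp [aext]

def jacobiWronskian (a : ℕ → ℝ) (u v : ℤ → ℂ) (k : ℤ) : ℂ :=
  aext a (k - 1) * (u (k - 1) * v k - u k * v (k - 1))

namespace IsJacobiSol

variable {a b : ℕ → ℝ} {z : ℂ} {u v : ℤ → ℂ}

lemma const_mul (hu : IsJacobiSol a b z u) (c : ℂ) : IsJacobiSol a b z (fun k => c * u k) :=
  fun n => by linear_combination c * hu n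

lemma map_conj {lam : ℝ} (hu : IsJacobiSol a b lam u) :
    IsJacobiSol a b lam (fun k => conj (u k)) :=
  fun n => by simpa using congrArg conj (hu n)

lemma im_mul_conj {lam : ℝ} (hu : IsJacobiSol a b lam u) (c : ℂ) :
    IsJacobiSol a b lam (fun k => ((c * conj (u k)).im : ℂ)) := fun n => by
  simp only [im_eq_sub_conj, map_mul, conj_conj]
  linear_combination (c * hu.map_conj n - conj c * hu n) / (2 * I)

lemma eq_of_apply_neg_one_of_apply_zero (ha : ∀ n, a n ≠ 0) (hu : IsJacobiSol a b z u)
    (hv : IsJacobiSol a b z v)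
    (h₁ : u (-1) = v (-1)) (h₀ : u 0 = v 0) (n : ℕ) : u n = v n := by
  suffices ∀ n : ℕ, u ((n : ℤ) - 1) = v ((n : ℤ) - 1) ∧ u n = v n from (this n).2
  intro n
  induction n with
  | zero => exact ⟨by simpa using h₁, by simpa using h₀⟩
  | succ n ih =>
    push_cast
    refine ⟨by simpa using ih.2, mul_left_cancel₀ (ofReal_ne_zero.2 (ha n)) ?_⟩
    linear_combination
      hu n - hv n - (aext a ((n : ℤ) - 1) : ℂ) * ih.1 - ((b n : ℂ) - z) * ih.2

lemma eq_mul_of_apply_neg_one_eq_zero (ha : ∀ n, a n ≠ 0) (hu : IsJacobiSol a b z u)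
    (hu₁ : u (-1) = 0)
    {P : ℤ → ℂ} (hP : IsJacobiSol a b z P) (hP₁ : P (-1) = 0) (hP₀ : P 0 = 1) (n : ℕ) :
    u n = u 0 * P n :=
  eq_of_apply_neg_one_of_apply_zero ha hu (hP.const_mul (u 0)) (by simp [hu₁, hP₁])
    (by simp [hP₀]) n

lemma jacobiWronskian_succ (hu : IsJacobiSol a b z u) (hv : IsJacobiSol a b z v) (n : ℕ) :
    jacobiWronskian a u v (n + 1 : ℕ) = jacobiWronskian a u v n := by
  simp only [jacobiWronskian, Nat.cast_succ, add_sub_cancel_right, aext_natCast]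
  linear_combination u n * hv n - v n * hu n

lemma jacobiWronskian_eq_initial (hu : IsJacobiSol a b z u) (hv : IsJacobiSol a b z v) (n : ℕ) :
    jacobiWronskian a u v n = jacobiWronskian a u v 0 := by
  induction n with
  | zero => rfl
  | succ n ih => rw [jacobiWronskian_succ hu hv, ih]

end IsJacobiSol

lemma tendsto_mul_conj_succ {f : ℤ → ℂ} {θ : ℝ}
    (hf : Tendsto (fun n : ℕ => f n * exp (I * n * θ)) atTop (𝓝 1)) :
    Tendsto (fun n : ℕ => f n * conj (f (n + 1 : ℕ))) atTop (𝓝 (exp (θ * I))) := by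
  set u : ℕ → ℂ := fun n => f n * exp (I * n * θ)
  have hu : ∀ n : ℕ, f n * conj (f (n + 1 : ℕ)) = u n * conj (u (n + 1)) * exp (θ * I) := by
    intro n
    have hexp : exp (I * n * θ) * conj (exp (I * (n + 1 : ℕ) * θ)) * exp (θ * I) = 1 := by
      rw [← exp_conj, ← exp_add, ← exp_add, ← exp_zero]
      congr 1
      simp only [map_mul, conj_I, conj_ofReal, map_natCast]
      push_cast
      ring
    simp only [u, map_mul]
    linear_combination -(f n * conj (f (n + 1 : ℕ))) * hexp
  have hlim := (hf.mul ((continuous_conj.tendsto 1).comp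
    (hf.comp (tendsto_add_atTop_nat 1)))).mul_const (exp (θ * I))
  simp only [map_one, mul_one, one_mul] at hlim
  exact hlim.congr fun n => (hu n).symm

lemma im_mul_conj_zero_eq_sin {a b : ℕ → ℝ} {lam θ : ℝ} {f : ℤ → ℂ}
    (hf : IsJacobiSol a b lam f) (ha : Tendsto a atTop (𝓝 (1 / 2)))
    (hf_lim : Tendsto (fun n : ℕ => f n * exp (I * n * θ)) atTop (𝓝 1)) :
    (f (-1) * conj (f 0)).im = Real.sin θ := by
  set W := jacobiWronskian a f fun k => conj (f k)
  have hW_succ : ∀ n : ℕ, W (n + 1 : ℕ) =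
      a n * (f n * conj (f (n + 1 : ℕ)) - conj (f n * conj (f (n + 1 : ℕ)))) := by
    intro n
    simp only [W, jacobiWronskian, Nat.cast_succ, add_sub_cancel_right, aext_natCast, map_mul,
      conj_conj]
    ring
  have hW_lim : Tendsto (fun n : ℕ => W (n + 1 : ℕ)) atTop
      (𝓝 ((1 / 2 : ℝ) * (exp (θ * I) - conj (exp (θ * I))))) := by
    simp only [hW_succ]
    have hx := tendsto_mul_conj_succ hf_lim
    exact ((continuous_ofReal.tendsto _).comp ha).mul (hx.sub ((continuous_conj.tendsto _).comp hx))
  have hW_const : W 0 = (1 / 2 : ℝ) * (exp (θ * I) - conj (exp (θ * I))) :=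
    tendsto_nhds_unique (tendsto_const_nhds.congr fun n =>
      (hf.jacobiWronskian_eq_initial hf.map_conj (n + 1)).symm) hW_lim
  have hW_zero : W 0 = (1 / 2 : ℝ) * (f (-1) * conj (f 0) - conj (f (-1) * conj (f 0))) := by
    simp [W, jacobiWronskian, aext_neg_one, mul_comm]
  rw [hW_zero, sub_conj, sub_conj] at hW_const
  have h := mul_right_cancel₀ I_ne_zero (mul_left_cancel₀ (by norm_num) hW_const)
  rw [← exp_ofReal_mul_I_im]
  exact_mod_cast mul_left_cancel₀ two_ne_zero (ofReal_injective h)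

lemma abs_im_mul_conj_sub_le {f : ℤ → ℂ} {θ κ η : ℝ}
    (hf₁ : exp (-I * θ) * f (-1) = κ * exp (I * η)) (n : ℕ) :
    |(f (-1) * conj (f n)).im - κ * Real.sin ((n + 1) * θ + η)|
      ≤ |κ| * ‖f n * exp (I * n * θ) - 1‖ := by
  set φ : ℝ := (n + 1) * θ + η
  have hφ : exp (φ * I) * conj (exp (I * n * θ)) = exp (I * θ) * exp (I * η) := by
    rw [← exp_conj, ← exp_add, ← exp_add]
    congr 1
    simp only [φ, map_mul, conj_I, conj_ofReal, map_natCast]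
    push_cast
    ring
  have hinv : exp (I * θ) * exp (-I * θ) = 1 := by rw [← exp_add, ← exp_zero]; ring_nf
  have hkey : f (-1) * conj (f n) - κ * exp (φ * I)
      = κ * (exp (φ * I) * conj (f n * exp (I * n * θ) - 1)) := by
    simp only [map_sub, map_mul, map_one]
    linear_combination (-κ * conj (f n)) * hφ + (conj (f n) * exp (I * θ)) * hf₁
      - (conj (f n) * f (-1)) * hinv
  calc |(f (-1) * conj (f n)).im - κ * Real.sin φ|
      = |(κ * (exp (φ * I) * conj (f n * exp (I * n * θ) - 1))).im| := by
        rw [← hkey, sub_im, im_ofReal_mul, exp_ofReal_mul_I_im]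
    _ ≤ ‖κ * (exp (φ * I) * conj (f n * exp (I * n * θ) - 1))‖ := abs_im_le_norm _
    _ = |κ| * ‖f n * exp (I * n * θ) - 1‖ := by
        rw [norm_mul, norm_mul, norm_real, norm_exp_ofReal_mul_I, norm_conj, one_mul,
          Real.norm_eq_abs]

theorem bernstein_szego_asymptotics_general
    (a b : ℕ → ℝ) (ha : ∀ n, 0 < a n)
    (htr : Summable (fun n : ℕ => |a n - 1/2| + |b n|))
    (ρ : ℕ → ℝ) (hρ : ∀ n, ρ n = ∑' m : ℕ, (|a (n + m) - 1/2| + |b (n + m)|))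
    (lam : ℝ) (hl1 : -1 < lam) (hl2 : lam < 1)
    (θ : ℝ) (hθ : θ = Real.arccos lam)
    (f : ℤ → ℂ) (hf : IsJacobiSol a b (lam : ℂ) f)
    (C₀ : ℝ)
    (hasym : ∀ n : ℕ, ‖f (n : ℤ) * Complex.exp (Complex.I * n * θ) - 1‖ ≤ C₀ * ρ n)
    (κ η : ℝ)
    (heq : Complex.exp (-Complex.I * θ) * f (-1) = (κ : ℂ) * Complex.exp (Complex.I * η))
    (P : ℤ → ℂ) (hP : IsJacobiSol a b (lam : ℂ) P) (hPm : P (-1) = 0) (hP0 : P 0 = 1) :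
    ∃ C : ℝ, ∀ n : ℕ,
      ‖P (n : ℤ) - ((κ / Real.sin θ * Real.sin (((n : ℝ) + 1) * θ + η) : ℝ) : ℂ)‖
        ≤ C * ρ n := by
  have hsin : Real.sin θ ≠ 0 := by
    rw [hθ, Real.sin_arccos]
    exact (Real.sqrt_pos.2 (by nlinarith)).ne'
  have hρ_lim : Tendsto ρ atTop (𝓝 0) := by
    convert tendsto_sum_nat_add fun m => |a m - 1/2| + |b m| using 2 with n
    simp_rw [hρ n, add_comm n]
  have ha_lim : Tendsto a atTop (𝓝 (1 / 2)) := by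
    rw [tendsto_iff_norm_sub_tendsto_zero]
    exact squeeze_zero (fun _ => norm_nonneg _)
      (fun n => le_add_of_nonneg_right (abs_nonneg (b n))) htr.tendsto_atTop_zero
  have hf_lim : Tendsto (fun n : ℕ => f n * exp (I * n * θ)) atTop (𝓝 1) := by
    rw [tendsto_iff_norm_sub_tendsto_zero]
    exact squeeze_zero (fun _ => norm_nonneg _) hasym (by simpa using hρ_lim.const_mul C₀)
  have hP_eq : ∀ n : ℕ, P n = ((f (-1) * conj (f n)).im / Real.sin θ : ℝ) := by
    intro n
    rw [ofReal_div, eq_div_iff (ofReal_ne_zero.2 hsin), mul_comm,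
      ← im_mul_conj_zero_eq_sin hf ha_lim hf_lim]
    exact ((hf.im_mul_conj (f (-1))).eq_mul_of_apply_neg_one_eq_zero (fun n => (ha n).ne')
      (by simp [mul_conj]) hP hPm hP0 n).symm
  refine ⟨|κ| * C₀ / |Real.sin θ|, fun n => ?_⟩
  rw [hP_eq, ← ofReal_sub, norm_real, Real.norm_eq_abs, div_mul_eq_mul_div, ← sub_div, abs_div,
    div_le_iff₀ (abs_pos.2 hsin)]
  calc |(f (-1) * conj (f n)).im - κ * Real.sin ((n + 1) * θ + η)|
      ≤ |κ| * ‖f n * exp (I * n * θ) - 1‖ := abs_im_mul_conj_sub_le heq n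
    _ ≤ |κ| * (C₀ * ρ n) := mul_le_mul_of_nonneg_left (hasym n) (abs_nonneg κ)
    _ = |κ| * C₀ / |Real.sin θ| * ρ n * |Real.sin θ| := by field_simp

/-- Bernstein–Szegő asymptotics
`P_n(λ) = κ(θ)(sin θ)⁻¹ sin((n+1)θ + η(θ)) + O(ρ_n)` for `λ = cos θ ∈ (-1,1)`. -/
theorem bernstein_szego_asymptotics
    (a b : ℕ → ℝ) (ha : ∀ n, 0 < a n)
    (htr : Summable (fun n : ℕ => |a n - 1/2| + |b n|))
    (ρ : ℕ → ℝ) (hρ : ∀ n, ρ n = ∑' m : ℕ, (|a (n + m) - 1/2| + |b (n + m)|))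
    (lam : ℝ) (hl1 : -1 < lam) (hl2 : lam < 1)
    (θ : ℝ) (hθ : θ = Real.arccos lam)
    (f : ℤ → ℂ) (hf : IsJacobiSol a b (lam : ℂ) f)
    (C₀ : ℝ)
    (hasym : ∀ n : ℕ, ‖f (n : ℤ) * Complex.exp (Complex.I * n * θ) - 1‖ ≤ C₀ * ρ n)
    (κ η : ℝ) (hκ : 0 < κ)
    (heq : Complex.exp (-Complex.I * θ) * f (-1) = (κ : ℂ) * Complex.exp (Complex.I * η))
    (P : ℤ → ℂ) (hP : IsJacobiSol a b (lam : ℂ) P) (hPm : P (-1) = 0) (hP0 : P 0 = 1) :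
    ∃ C : ℝ, ∀ n : ℕ,
      ‖P (n : ℤ) - ((κ / Real.sin θ * Real.sin (((n : ℝ) + 1) * θ + η) : ℝ) : ℂ)‖
        ≤ C * ρ n :=
  bernstein_szego_asymptotics_general a b ha htr ρ hρ lam hl1 hl2 θ hθ f hf C₀ hasym κ η heq P hP
    hPm hP0
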